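/- Let m ≥ 2 and let R be an algebraic curvature tensor on ℝ^m with curvature operator 𝔯. For any integer 1 ≤ k ≤ m(m−1)/2 and any collection {π_1, …, π_k} of mutually orthogonal 2-dimensional subspaces of ℝ^m, one has (1/k) Σ_{i=1}^k Sect(π_i) ≥ (1/2)·𝔯^(k), where 𝔯^(k) is the average of the k smallest eigenvalues of 𝔯. -/

import Mathlib

open Finset

namespace Paper

noncomputable section

variable {m : ℕ}

/-- Kronecker delta. -/
def delta (i j : Fin m) : ℝ := if i = j then 1 else 0

/-- `T` is an algebraic curvature tensor: antisymmetry in the first pair, pair symmetry,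
and the first Bianchi identity. -/
def IsACT (T : Fin m → Fin m → Fin m → Fin m → ℝ) : Prop :=
  (∀ i j k t, T i j k t = - T j i k t) ∧
  (∀ i j k t, T i j k t = T k t i j) ∧
  (∀ i j k t, T i j k t + T i t j k + T i k t j = 0)

/-- Ricci contraction `(E_T)_{ij} = Σ_k T_{kikj}`. -/
def ric (T : Fin m → Fin m → Fin m → Fin m → ℝ) (i j : Fin m) : ℝ := ∑ k, T k i k j

/-- Total trace `S_T`. -/
def traceS (T : Fin m → Fin m → Fin m → Fin m → ℝ) : ℝ := ∑ i, ric T i i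

def inner2 (A B : Fin m → Fin m → ℝ) : ℝ := ∑ i, ∑ j, A i j * B i j

def inner4 (A B : Fin m → Fin m → Fin m → Fin m → ℝ) : ℝ :=
  ∑ i, ∑ j, ∑ k, ∑ t, A i j k t * B i j k t

def inner6 (A B : Fin m → Fin m → Fin m → Fin m → Fin m → Fin m → ℝ) : ℝ :=
  ∑ i, ∑ j, ∑ k, ∑ t, ∑ s, ∑ r, A i j k t s r * B i j k t s r

/-- Lichnerowicz operator `Γ` associated to `R`, acting on 2-covariant tensors. -/
def gamma2 (R : Fin m → Fin m → Fin m → Fin m → ℝ) (Q : Fin m → Fin m → ℝ)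
    (i j : Fin m) : ℝ :=
  (∑ s, ric R i s * Q s j) + (∑ s, ric R j s * Q i s)
    - ∑ s, ∑ t, (R i s j t * Q s t + R j s i t * Q t s)

/-- Lichnerowicz operator `Γ` associated to `R`, acting on 4-covariant tensors. -/
def gamma4 (R Q : Fin m → Fin m → Fin m → Fin m → ℝ) (i j k w : Fin m) : ℝ :=
  (∑ s, ric R i s * Q s j k w) + (∑ s, ric R j s * Q i s k w) +
  (∑ s, ric R k s * Q i j s w) + (∑ s, ric R w s * Q i j k s)
  - ∑ s, ∑ t,
      (R i s j t * Q s t k w + R i s k t * Q s j t w + R i s w t * Q s j k t +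
       R j s i t * Q t s k w + R j s k t * Q i s t w + R j s w t * Q i s k t +
       R k s i t * Q t j s w + R k s j t * Q i t s w + R k s w t * Q i j s t +
       R w s i t * Q t j k s + R w s j t * Q i t k s + R w s k t * Q i j t s)

/-- Kulkarni–Nomizu product of symmetric matrices. -/
def kn (A B : Fin m → Fin m → ℝ) (i j k t : Fin m) : ℝ :=
  A i k * B j t + A j t * B i k - A i t * B j k - A j k * B i t

/-- Traceless part of a matrix. -/
def Zmat (E : Fin m → Fin m → ℝ) (i j : Fin m) : ℝ :=
  E i j - ((∑ k, E k k) / (m : ℝ)) * delta i j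

/-- Traceless part `Z_T` of the Ricci contraction of `T`. -/
def Zpart (T : Fin m → Fin m → Fin m → Fin m → ℝ) (i j : Fin m) : ℝ :=
  ric T i j - (traceS T / (m : ℝ)) * delta i j

/-- Schouten-type tensor `A_T`. -/
def Apart (T : Fin m → Fin m → Fin m → Fin m → ℝ) (i j : Fin m) : ℝ :=
  ric T i j - (traceS T / (2 * ((m : ℝ) - 1))) * delta i j

/-- Weyl part `W_T = T - (1/(m-2)) A_T ⊙ δ`. -/
def Wpart (T : Fin m → Fin m → Fin m → Fin m → ℝ) (i j k t : Fin m) : ℝ :=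
  T i j k t - (1 / ((m : ℝ) - 2)) * kn (Apart T) delta i j k t

/-- Pseudo-projective tensor `P_T`. -/
def pproj (T : Fin m → Fin m → Fin m → Fin m → ℝ) (i j k t : Fin m) : ℝ :=
  T i j k t - (1 / ((m : ℝ) - 1)) * (delta i k * ric T j t - delta i t * ric T j k)

/-- The 6-covariant tensor `T̂` associated to a 4-covariant tensor `T`. -/
def hat4 (T : Fin m → Fin m → Fin m → Fin m → ℝ) (i j k t s r : Fin m) : ℝ :=
  (1 / 2) * (T s j k t * delta i r + T i s k t * delta j r + T i j s t * delta k r +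
             T i j k s * delta t r - T r j k t * delta i s - T i r k t * delta j s -
             T i j r t * delta k s - T i j k r * delta t s)

/-- Sectional curvature of the plane spanned by `X, Y`. -/
def sect (R : Fin m → Fin m → Fin m → Fin m → ℝ) (X Y : Fin m → ℝ) : ℝ :=
  (∑ i, ∑ j, ∑ k, ∑ t, R i j k t * X i * Y j * X k * Y t) /
    ((∑ i, X i * X i) * (∑ i, Y i * Y i) - (∑ i, X i * Y i) ^ 2)

/-- Decomposable 2-form associated to the pair `(X, Y)`. -/
def dform (X Y : Fin m → ℝ) (i j : Fin m) : ℝ := (X i * Y j - X j * Y i) / 2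

/-- A full spectral decomposition of the curvature operator `𝔯` on `Λ²` induced by `R`:
`ω` is an orthonormal family of antisymmetric eigen-2-forms (of cardinality `dim Λ² = m(m-1)/2`,
hence an orthonormal eigenbasis) with nondecreasing eigenvalues `lam`. -/
def SpectralData (R : Fin m → Fin m → Fin m → Fin m → ℝ)
    (lam : Fin (m * (m - 1) / 2) → ℝ) (ω : Fin (m * (m - 1) / 2) → Fin m → Fin m → ℝ) :
    Prop :=
  (∀ α i j, ω α i j = - ω α j i) ∧
  (∀ α β, inner2 (ω α) (ω β) = if α = β then 1 else 0) ∧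
  (∀ α k t, (∑ i, ∑ j, R i j k t * ω α i j) = lam α * ω α k t) ∧
  Monotone lam

/-- `𝔯^(k)`: the average of the `k` smallest eigenvalues. -/
def partialAvg {N : ℕ} (lam : Fin N → ℝ) (k : ℕ) : ℝ :=
  (∑ α ∈ Finset.univ.filter (fun α : Fin N => (α : ℕ) < k), lam α) / (k : ℝ)

-- ===== auxiliary lemmas =====

lemma sum3_swap {ι₁ ι₂ ι₃ : Type*} [Fintype ι₁] [Fintype ι₂] [Fintype ι₃]
    (f : ι₁ → ι₂ → ι₃ → ℝ) :
    ∑ i, ∑ j, ∑ α, f i j α = ∑ α, ∑ i, ∑ j, f i j α := by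
  have h1 : ∀ i : ι₁, ∑ j, ∑ α, f i j α = ∑ α, ∑ j, f i j α := fun i => Finset.sum_comm
  simp only [h1]
  exact Finset.sum_comm

lemma sum4_swap {ι₁ ι₂ ι₃ ι₄ : Type*} [Fintype ι₁] [Fintype ι₂] [Fintype ι₃] [Fintype ι₄]
    (f : ι₁ → ι₂ → ι₃ → ι₄ → ℝ) :
    ∑ i, ∑ j, ∑ k, ∑ t, f i j k t = ∑ k, ∑ t, ∑ i, ∑ j, f i j k t := by
  have h1 : ∀ i : ι₁, ∑ j, ∑ k, ∑ t, f i j k t = ∑ k, ∑ j, ∑ t, f i j k t :=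
    fun i => Finset.sum_comm
  simp only [h1]
  rw [Finset.sum_comm]
  refine Finset.sum_congr rfl fun k _ => ?_
  have h2 : ∀ i : ι₁, ∑ j, ∑ t, f i j k t = ∑ t, ∑ j, f i j k t := fun i => Finset.sum_comm
  simp only [h2]
  exact Finset.sum_comm

lemma inner2_comm (A B : Fin m → Fin m → ℝ) : inner2 A B = inner2 B A := by
  unfold inner2
  refine Finset.sum_congr rfl fun i _ => Finset.sum_congr rfl fun j _ => mul_comm _ _

lemma inner2_sum_left {N : ℕ} (g : Fin N → ℝ) (ω : Fin N → Fin m → Fin m → ℝ)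
    (B : Fin m → Fin m → ℝ) :
    inner2 (fun a b => ∑ α, g α * ω α a b) B = ∑ α, g α * inner2 (ω α) B := by
  unfold inner2
  have h1 : ∀ a b : Fin m, (∑ α, g α * ω α a b) * B a b = ∑ α, g α * (ω α a b * B a b) := by
    intro a b
    rw [Finset.sum_mul]
    exact Finset.sum_congr rfl fun α _ => by ring
  simp only [h1]
  rw [sum3_swap]
  refine Finset.sum_congr rfl fun α _ => ?_
  simp [Finset.mul_sum]

lemma inner2_expand {N : ℕ} (ω : Fin N → Fin m → Fin m → ℝ)
    (hortho : ∀ α β, inner2 (ω α) (ω β) = if α = β then (1:ℝ) else 0)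
    (c d : Fin N → ℝ) :
    inner2 (fun a b => ∑ α, c α * ω α a b) (fun a b => ∑ α, d α * ω α a b)
      = ∑ α, c α * d α := by
  rw [inner2_sum_left]
  refine Finset.sum_congr rfl fun α _ => ?_
  rw [inner2_comm, inner2_sum_left]
  have : ∀ β, d β * inner2 (ω β) (ω α) = if β = α then d α else 0 := by
    intro β
    rw [hortho]
    by_cases h : β = α <;> simp [h]
  simp only [this, Finset.sum_ite_eq', Finset.mem_univ, if_true]

lemma dform_antisym (X Y : Fin m → ℝ) (a b : Fin m) : dform X Y a b = - dform X Y b a := by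
  unfold dform; ring

lemma lagrange (X Y : Fin m → ℝ) :
    inner2 (dform X Y) (dform X Y)
      = ((∑ i, X i * X i) * (∑ i, Y i * Y i) - (∑ i, X i * Y i) ^ 2) / 2 := by
  unfold inner2
  have h1 : ∀ a b : Fin m, dform X Y a b * dform X Y a b
      = (X a * X a) * (Y b * Y b) / 4 + (X b * X b) * (Y a * Y a) / 4
        - (X a * Y a) * (X b * Y b) / 2 := by
    intro a b; unfold dform; ring
  simp only [h1]
  have hsplit : ∀ a : Fin m, ∑ b, ((X a * X a) * (Y b * Y b) / 4
      + (X b * X b) * (Y a * Y a) / 4 - (X a * Y a) * (X b * Y b) / 2)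
      = (∑ b, (X a * X a) * (Y b * Y b) / 4) + (∑ b, (X b * X b) * (Y a * Y a) / 4)
        - (∑ b, (X a * Y a) * (X b * Y b) / 2) := by
    intro a
    rw [Finset.sum_sub_distrib, Finset.sum_add_distrib]
  simp only [hsplit]
  rw [Finset.sum_sub_distrib, Finset.sum_add_distrib]
  have e1 : ∑ a : Fin m, ∑ b : Fin m, X a * X a * (Y b * Y b) / 4
      = (∑ i, X i * X i) * (∑ i, Y i * Y i) / 4 := by
    rw [Finset.sum_mul_sum]
    simp only [← Finset.sum_div]
  have e2 : ∑ a : Fin m, ∑ b : Fin m, X b * X b * (Y a * Y a) / 4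
      = (∑ i, X i * X i) * (∑ i, Y i * Y i) / 4 := by
    rw [Finset.sum_comm, Finset.sum_mul_sum]
    simp only [← Finset.sum_div]
  have e3 : ∑ a : Fin m, ∑ b : Fin m, X a * Y a * (X b * Y b) / 2
      = (∑ i, X i * Y i) * (∑ i, X i * Y i) / 2 := by
    rw [Finset.sum_mul_sum]
    simp only [← Finset.sum_div]
  rw [e1, e2, e3]
  ring

lemma inner2_self_nonneg (A : Fin m → Fin m → ℝ) : 0 ≤ inner2 A A :=
  Finset.sum_nonneg fun i _ => Finset.sum_nonneg fun j _ => mul_self_nonneg _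

lemma dform_pos (X Y : Fin m → ℝ) (h : LinearIndependent ℝ ![X, Y]) :
    0 < inner2 (dform X Y) (dform X Y) := by
  rcases lt_or_eq_of_le (inner2_self_nonneg (dform X Y)) with hlt | heq
  · exact hlt
  exfalso
  have hz : ∀ a b : Fin m, dform X Y a b = 0 := by
    intro a b
    have h1 : ∀ i ∈ (Finset.univ : Finset (Fin m)),
        0 ≤ ∑ j, dform X Y i j * dform X Y i j :=
      fun i _ => Finset.sum_nonneg fun j _ => mul_self_nonneg _
    have h2 := (Finset.sum_eq_zero_iff_of_nonneg h1).1 heq.symm a (Finset.mem_univ a)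
    have h3 := (Finset.sum_eq_zero_iff_of_nonneg
      (fun j _ => mul_self_nonneg (dform X Y a j))).1 h2 b (Finset.mem_univ b)
    exact mul_self_eq_zero.1 h3
  have hxy : ∀ a b : Fin m, X a * Y b = X b * Y a := by
    intro a b
    have := hz a b
    unfold dform at this
    have h4 : X a * Y b - X b * Y a = 0 := by linarith [this]
    linarith
  rw [LinearIndependent.pair_iff] at h
  by_cases hY : Y = 0
  · have := (h 0 1 (by simp [hY])).2
    norm_num at this
  · obtain ⟨j, hj⟩ : ∃ j, Y j ≠ 0 := by
      by_contra hc
      push_neg at hc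
      exact hY (funext hc)
    have := (h (Y j) (-(X j)) (by
      funext i
      simp only [Pi.add_apply, Pi.smul_apply, smul_eq_mul, Pi.zero_apply]
      have := hxy i j
      ring_nf
      nlinarith [hxy i j])).1
    exact hj this

lemma sum_antisym_dform (g : Fin m → Fin m → ℝ) (hg : ∀ a b, g a b = - g b a)
    (X Y : Fin m → ℝ) :
    ∑ a, ∑ b, g a b * dform X Y a b = ∑ a, ∑ b, g a b * (X a * Y b) := by
  have h2 : ∑ a, ∑ b, g a b * (X b * Y a) = - ∑ a, ∑ b, g a b * (X a * Y b) := by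
    rw [Finset.sum_comm]
    rw [← Finset.sum_neg_distrib]
    refine Finset.sum_congr rfl fun a _ => ?_
    rw [← Finset.sum_neg_distrib]
    refine Finset.sum_congr rfl fun b _ => ?_
    rw [hg b a]
    ring
  have h1 : ∀ a b : Fin m, g a b * dform X Y a b
      = g a b * (X a * Y b) / 2 - g a b * (X b * Y a) / 2 := by
    intro a b; unfold dform; ring
  simp only [h1]
  have hsplit : ∀ a : Fin m, ∑ b, (g a b * (X a * Y b) / 2 - g a b * (X b * Y a) / 2)
      = (∑ b, g a b * (X a * Y b) / 2) - ∑ b, g a b * (X b * Y a) / 2 :=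
    fun a => by rw [Finset.sum_sub_distrib]
  simp only [hsplit]
  rw [Finset.sum_sub_distrib]
  simp only [← Finset.sum_div]
  rw [h2]
  ring

lemma sect_num (R : Fin m → Fin m → Fin m → Fin m → ℝ) (hR : IsACT R) (X Y : Fin m → ℝ) :
    ∑ i, ∑ j, ∑ k, ∑ t, R i j k t * X i * Y j * X k * Y t
      = ∑ k, ∑ t, (∑ i, ∑ j, R i j k t * dform X Y i j) * dform X Y k t := by
  obtain ⟨ha, hp, _⟩ := hR
  -- F i j := ∑ k, ∑ t, R i j k t * (X k * Y t)
  have hstep1 : ∑ i, ∑ j, ∑ k, ∑ t, R i j k t * X i * Y j * X k * Y t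
      = ∑ i, ∑ j, (∑ k, ∑ t, R i j k t * (X k * Y t)) * (X i * Y j) := by
    refine Finset.sum_congr rfl fun i _ => Finset.sum_congr rfl fun j _ => ?_
    rw [Finset.sum_mul]
    refine Finset.sum_congr rfl fun k _ => ?_
    rw [Finset.sum_mul]
    exact Finset.sum_congr rfl fun t _ => by ring
  -- inner antisymmetry in (k,t)
  have hkt : ∀ i j, ∑ k, ∑ t, R i j k t * (X k * Y t)
      = ∑ k, ∑ t, R i j k t * dform X Y k t := by
    intro i j
    exact (sum_antisym_dform (fun k t => R i j k t)
      (fun k t => show R i j k t = - R i j t k by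
        rw [hp i j k t, ha k t i j, hp t k i j]) X Y).symm
  -- outer antisymmetry in (i,j)
  have hij : ∑ i, ∑ j, (∑ k, ∑ t, R i j k t * dform X Y k t) * (X i * Y j)
      = ∑ i, ∑ j, (∑ k, ∑ t, R i j k t * dform X Y k t) * dform X Y i j := by
    refine (sum_antisym_dform (fun i j => ∑ k, ∑ t, R i j k t * dform X Y k t) ?_ X Y).symm
    intro a b
    rw [← Finset.sum_neg_distrib]
    refine Finset.sum_congr rfl fun k _ => ?_
    rw [← Finset.sum_neg_distrib]
    refine Finset.sum_congr rfl fun t _ => ?_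
    rw [ha a b k t]
    ring
  rw [hstep1]
  simp only [hkt]
  rw [hij]
  -- now pure rearrangement
  have hflat : ∑ i, ∑ j, (∑ k, ∑ t, R i j k t * dform X Y k t) * dform X Y i j
      = ∑ i, ∑ j, ∑ k, ∑ t, R i j k t * dform X Y k t * dform X Y i j := by
    refine Finset.sum_congr rfl fun i _ => Finset.sum_congr rfl fun j _ => ?_
    rw [Finset.sum_mul]
    exact Finset.sum_congr rfl fun k _ => by rw [Finset.sum_mul]
  rw [hflat, sum4_swap]
  refine Finset.sum_congr rfl fun k _ => Finset.sum_congr rfl fun t _ => ?_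
  rw [Finset.sum_mul]
  refine Finset.sum_congr rfl fun i _ => ?_
  rw [Finset.sum_mul]
  exact Finset.sum_congr rfl fun j _ => by ring

lemma ray_expand {N : ℕ} (R : Fin m → Fin m → Fin m → Fin m → ℝ) (lam : Fin N → ℝ)
    (ω : Fin N → Fin m → Fin m → ℝ)
    (hortho : ∀ α β, inner2 (ω α) (ω β) = if α = β then (1:ℝ) else 0)
    (heig : ∀ α k t, (∑ i, ∑ j, R i j k t * ω α i j) = lam α * ω α k t)
    (g : Fin N → ℝ) (A : Fin m → Fin m → ℝ) (hA : ∀ a b, A a b = ∑ α, g α * ω α a b) :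
    ∑ k, ∑ t, (∑ i, ∑ j, R i j k t * A i j) * A k t = ∑ α, lam α * g α ^ 2 := by
  have h1 : ∀ k t : Fin m, ∑ i, ∑ j, R i j k t * A i j
      = ∑ α, (g α * lam α) * ω α k t := by
    intro k t
    have e : ∀ i j : Fin m, R i j k t * A i j = ∑ α, g α * (R i j k t * ω α i j) := by
      intro i j
      rw [hA, Finset.mul_sum]
      exact Finset.sum_congr rfl fun α _ => by ring
    simp only [e]
    rw [sum3_swap]
    refine Finset.sum_congr rfl fun α _ => ?_
    have : ∑ i, ∑ j, g α * (R i j k t * ω α i j) = g α * ∑ i, ∑ j, R i j k t * ω α i j := by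
      rw [Finset.mul_sum]
      exact Finset.sum_congr rfl fun i _ => by rw [Finset.mul_sum]
    rw [this, heig]
    ring
  have h2 : ∑ k, ∑ t, (∑ i, ∑ j, R i j k t * A i j) * A k t
      = inner2 (fun a b => ∑ α, (g α * lam α) * ω α a b) (fun a b => ∑ α, g α * ω α a b) := by
    unfold inner2
    refine Finset.sum_congr rfl fun k _ => Finset.sum_congr rfl fun t _ => ?_
    simp only [h1]
    rw [← hA]
  rw [h2, inner2_expand ω hortho]
  exact Finset.sum_congr rfl fun α _ => by ring

lemma card_sigma_fin (m : ℕ) :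
    Fintype.card ((i : Fin m) × Fin i.val) = m * (m - 1) / 2 := by
  rw [Fintype.card_sigma]
  simp only [Fintype.card_fin]
  rw [Fin.sum_univ_eq_sum_range (fun i => i) m]
  exact Finset.sum_range_id m

lemma antisym_eq_zero (B : Fin m → Fin m → ℝ) (hB : ∀ a b, B a b = - B b a)
    (h0 : ∀ a b : Fin m, a.val < b.val → B a b = 0) : ∀ a b, B a b = 0 := by
  intro a b
  rcases lt_trichotomy a.val b.val with h | h | h
  · exact h0 a b h
  · have : a = b := Fin.ext h
    subst this
    have := hB a a
    linarith
  · rw [hB a b, h0 b a h, neg_zero]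

lemma complete_expansion (ω : Fin (m * (m - 1) / 2) → Fin m → Fin m → ℝ)
    (hanti : ∀ α i j, ω α i j = - ω α j i)
    (hortho : ∀ α β, inner2 (ω α) (ω β) = if α = β then (1:ℝ) else 0)
    (A : Fin m → Fin m → ℝ) (hA : ∀ i j, A i j = - A j i) :
    ∃ g : Fin (m * (m - 1) / 2) → ℝ, ∀ i j, A i j = ∑ α, g α * ω α i j := by
  classical
  set ι := (i : Fin m) × Fin i.val with hι
  have hcard : Fintype.card ι = m * (m - 1) / 2 := card_sigma_fin m
  set v : Fin (m * (m - 1) / 2) → ι → ℝ :=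
    fun α s => ω α ⟨s.2.val, s.2.isLt.trans s.1.isLt⟩ s.1 with hv
  -- key: a sum of the ω's vanishing on the strict lower triangle is trivial
  have hkey : ∀ g : Fin (m * (m - 1) / 2) → ℝ,
      (∀ s : ι, ∑ α, g α * v α s = 0) → ∀ α, g α = 0 := by
    intro g hg β
    set B : Fin m → Fin m → ℝ := fun a b => ∑ α, g α * ω α a b with hBdef
    have hBanti : ∀ a b, B a b = - B b a := by
      intro a b
      rw [hBdef]
      simp only
      rw [← Finset.sum_neg_distrib]
      exact Finset.sum_congr rfl fun α _ => by rw [hanti α a b]; ring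
    have hB0 : ∀ a b : Fin m, a.val < b.val → B a b = 0 := by
      intro a b hab
      have := hg ⟨b, ⟨a.val, hab⟩⟩
      simpa [hv, Fin.eta] using this
    have hBzero : ∀ a b, B a b = 0 := antisym_eq_zero B hBanti hB0
    have h1 : inner2 B (ω β) = g β := by
      rw [hBdef]
      rw [inner2_sum_left]
      have : ∀ α, g α * inner2 (ω α) (ω β) = if α = β then g β else 0 := by
        intro α
        rw [hortho]
        by_cases h : α = β <;> simp [h]
      simp only [this, Finset.sum_ite_eq', Finset.mem_univ, if_true]
    have h2 : inner2 B (ω β) = 0 := by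
      unfold inner2
      refine Finset.sum_eq_zero fun i _ => Finset.sum_eq_zero fun j _ => ?_
      rw [hBzero i j, zero_mul]
    rw [← h1, h2]
  have hli : LinearIndependent ℝ v := by
    rw [Fintype.linearIndependent_iff]
    intro g hg
    refine hkey g fun s => ?_
    have := congrFun hg s
    simpa [Finset.sum_apply] using this
  have hspan : Submodule.span ℝ (Set.range v) = ⊤ := by
    refine hli.span_eq_top_of_card_eq_finrank' ?_
    rw [Module.finrank_fintype_fun_eq_card, Fintype.card_fin, hcard]
  -- express the lower-triangle restriction of A in terms of v
  have hmem : (fun s : ι => A ⟨s.2.val, s.2.isLt.trans s.1.isLt⟩ s.1)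
      ∈ Submodule.span ℝ (Set.range v) := by
    rw [hspan]; exact Submodule.mem_top
  rw [Finsupp.mem_span_range_iff_exists_finsupp] at hmem
  obtain ⟨c, hc⟩ := hmem
  set g : Fin (m * (m - 1) / 2) → ℝ := fun α => c α with hgdef
  refine ⟨g, ?_⟩
  set B : Fin m → Fin m → ℝ := fun a b => A a b - ∑ α, g α * ω α a b with hBdef
  have hBanti : ∀ a b, B a b = - B b a := by
    intro a b
    rw [hBdef]
    simp only
    rw [hA a b]
    rw [show ∑ α, g α * ω α a b = - ∑ α, g α * ω α b a by
      rw [← Finset.sum_neg_distrib]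
      exact Finset.sum_congr rfl fun α _ => by rw [hanti α a b]; ring]
    ring
  have hB0 : ∀ a b : Fin m, a.val < b.val → B a b = 0 := by
    intro a b hab
    have hval := congrFun hc ⟨b, ⟨a.val, hab⟩⟩
    have hsum : (c.sum fun α r => r • v α) ⟨b, ⟨a.val, hab⟩⟩
        = ∑ α, g α * v α ⟨b, ⟨a.val, hab⟩⟩ := by
      rw [Finsupp.sum_fintype]
      · rw [Finset.sum_apply]
        exact Finset.sum_congr rfl fun α _ => rfl
      · intro α; simp
    rw [hBdef]
    simp only
    have hv2 : ∀ α, v α ⟨b, ⟨a.val, hab⟩⟩ = ω α a b := by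
      intro α; rw [hv]
    rw [sub_eq_zero]
    rw [show A a b = (fun s : ι => A ⟨s.2.val, s.2.isLt.trans s.1.isLt⟩ s.1) ⟨b, ⟨a.val, hab⟩⟩
      from rfl]
    rw [← hc]
    rw [hsum]
  have := antisym_eq_zero B hBanti hB0
  intro i j
  have h := this i j
  rw [hBdef] at h
  simp only at h
  linarith

lemma bessel_row {N k : ℕ} (c : Fin k → Fin N → ℝ)
    (hc : ∀ i j, ∑ α, c i α * c j α = if i = j then (1:ℝ) else 0) (α : Fin N) :
    ∑ i, c i α ^ 2 ≤ 1 := by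
  classical
  set S : Fin N → ℝ := fun β => ∑ i, c i α * c i β with hS
  have hnonneg : (0:ℝ) ≤ ∑ β, ((if β = α then (1:ℝ) else 0) - S β) ^ 2 :=
    Finset.sum_nonneg fun β _ => sq_nonneg _
  have hexp : ∀ β : Fin N, ((if β = α then (1:ℝ) else 0) - S β) ^ 2
      = (if β = α then (1:ℝ) else 0) - 2 * ((if β = α then (1:ℝ) else 0) * S β) + S β ^ 2 := by
    intro β
    by_cases h : β = α <;> simp [h] <;> ring
  rw [Finset.sum_congr rfl fun β _ => hexp β] at hnonneg
  rw [Finset.sum_add_distrib, Finset.sum_sub_distrib] at hnonneg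
  have e1 : ∑ β : Fin N, (if β = α then (1:ℝ) else 0) = 1 := by
    simp [Finset.sum_ite_eq', Finset.mem_univ]
  have e2 : ∑ β : Fin N, 2 * ((if β = α then (1:ℝ) else 0) * S β) = 2 * S α := by
    rw [← Finset.mul_sum]
    congr 1
    have h0 : ∀ β : Fin N, (if β = α then (1:ℝ) else 0) * S β = if β = α then S α else 0 := by
      intro β; by_cases h : β = α <;> simp [h]
    simp only [h0, Finset.sum_ite_eq', Finset.mem_univ, if_true]
  have e3 : ∑ β : Fin N, S β ^ 2 = S α := by
    have h1 : ∀ β : Fin N, S β ^ 2 = ∑ i, ∑ j, (c i α * c j α) * (c i β * c j β) := by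
      intro β
      rw [hS]
      simp only [sq]
      rw [Finset.sum_mul_sum]
      exact Finset.sum_congr rfl fun i _ => Finset.sum_congr rfl fun j _ => by ring
    simp only [h1]
    rw [← sum3_swap (fun i j β => (c i α * c j α) * (c i β * c j β))]
    have h2 : ∀ i j : Fin k, ∑ β, (c i α * c j α) * (c i β * c j β)
        = if i = j then c i α * c i α else 0 := by
      intro i j
      rw [← Finset.mul_sum, hc]
      by_cases h : i = j
      · subst h; simp
      · simp [h]
    simp only [h2, Finset.sum_ite_eq, Finset.mem_univ, if_true]
    rfl
  rw [e1, e2, e3] at hnonneg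
  have hSα : S α = ∑ i, c i α ^ 2 := by
    rw [hS]
    exact Finset.sum_congr rfl fun i _ => (sq (c i α)).symm
  rw [hSα] at hnonneg
  linarith

lemma filter_lt_card {N k : ℕ} (hk2 : k ≤ N) :
    (Finset.univ.filter (fun α : Fin N => (α : ℕ) < k)).card = k := by
  classical
  have : Finset.univ.filter (fun α : Fin N => (α : ℕ) < k)
      = Finset.map (Fin.castLEEmb hk2) Finset.univ := by
    ext β
    simp only [Finset.mem_filter, Finset.mem_univ, true_and, Finset.mem_map,
      Fin.castLEEmb_apply]
    constructor
    · intro h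
      exact ⟨⟨β.val, h⟩, Fin.ext rfl⟩
    · rintro ⟨i, rfl⟩
      exact i.isLt
  rw [this, Finset.card_map, Finset.card_univ, Fintype.card_fin]

lemma kyfan {N k : ℕ} (hk1 : 1 ≤ k) (hk2 : k ≤ N) (lam : Fin N → ℝ) (hmono : Monotone lam)
    (c : Fin k → Fin N → ℝ)
    (hc : ∀ i j, ∑ α, c i α * c j α = if i = j then (1:ℝ) else 0) :
    ∑ α ∈ Finset.univ.filter (fun α : Fin N => (α : ℕ) < k), lam α
      ≤ ∑ i, ∑ α, lam α * (c i α) ^ 2 := by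
  classical
  set t : Fin N → ℝ := fun α => ∑ i, c i α ^ 2 with ht
  have ht1 : ∀ α, t α ≤ 1 := fun α => bessel_row c hc α
  have ht0 : ∀ α, 0 ≤ t α := fun α => Finset.sum_nonneg fun i _ => sq_nonneg _
  have hts : ∑ α, t α = (k : ℝ) := by
    rw [ht]
    rw [Finset.sum_comm]
    have : ∀ i : Fin k, ∑ α, c i α ^ 2 = 1 := by
      intro i
      have := hc i i
      rw [if_pos rfl] at this
      rw [← this]
      exact Finset.sum_congr rfl fun α _ => sq (c i α)
    simp [this]
  have hrhs : ∑ i, ∑ α, lam α * (c i α) ^ 2 = ∑ α, lam α * t α := by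
    rw [Finset.sum_comm]
    refine Finset.sum_congr rfl fun α _ => ?_
    rw [ht, Finset.mul_sum]
  rw [hrhs]
  set s := Finset.univ.filter (fun α : Fin N => (α : ℕ) < k) with hs
  have hcard : s.card = k := filter_lt_card hk2
  set μ := lam ⟨k - 1, by omega⟩ with hμ
  have hlam_le : ∀ α ∈ s, lam α ≤ μ := by
    intro α hα
    rw [hs, Finset.mem_filter] at hα
    exact hmono (by simp [Fin.le_def]; omega)
  have hlam_ge : ∀ α ∈ sᶜ, μ ≤ lam α := by
    intro α hα
    rw [hs, Finset.compl_filter, Finset.mem_filter] at hα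
    have : ¬ (α : ℕ) < k := hα.2
    exact hmono (by simp [Fin.le_def]; omega)
  have hsplit : ∑ α, lam α * t α = ∑ α ∈ s, lam α * t α + ∑ α ∈ sᶜ, lam α * t α :=
    (Finset.sum_add_sum_compl s _).symm
  have htsplit : ∑ α ∈ s, t α + ∑ α ∈ sᶜ, t α = (k : ℝ) := by
    rw [Finset.sum_add_sum_compl]; exact hts
  -- ∑_s lam (1 - t) ≤ μ ∑_s (1 - t) = μ (k - ∑_s t) = μ ∑_{sᶜ} t ≤ ∑_{sᶜ} lam t
  have h1 : ∑ α ∈ s, lam α - ∑ α ∈ s, lam α * t α ≤ μ * ∑ α ∈ sᶜ, t α := by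
    have : ∑ α ∈ s, (lam α * (1 - t α)) ≤ ∑ α ∈ s, (μ * (1 - t α)) := by
      refine Finset.sum_le_sum fun α hα => ?_
      exact mul_le_mul_of_nonneg_right (hlam_le α hα) (by linarith [ht1 α])
    have e : ∑ α ∈ s, (μ * (1 - t α)) = μ * ((k : ℝ) - ∑ α ∈ s, t α) := by
      rw [← Finset.mul_sum]
      congr 1
      rw [Finset.sum_sub_distrib, Finset.sum_const, hcard]
      simp
    have e2 : (k : ℝ) - ∑ α ∈ s, t α = ∑ α ∈ sᶜ, t α := by linarith
    have e3 : ∑ α ∈ s, (lam α * (1 - t α)) = ∑ α ∈ s, lam α - ∑ α ∈ s, lam α * t α := by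
      rw [← Finset.sum_sub_distrib]
      exact Finset.sum_congr rfl fun α _ => by ring
    rw [e3] at this
    rw [e, e2] at this
    exact this
  have h2 : μ * ∑ α ∈ sᶜ, t α ≤ ∑ α ∈ sᶜ, lam α * t α := by
    rw [Finset.mul_sum]
    refine Finset.sum_le_sum fun α hα => ?_
    exact mul_le_mul_of_nonneg_right (hlam_ge α hα) (ht0 α)
  rw [hsplit]
  linarith

/-- For any integer `1 ≤ k ≤ m(m−1)/2` and any collection of `k` mutually
orthogonal 2-planes, `(1/k) Σ Sect(π_i) ≥ (1/2)·𝔯^(k)`. -/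
theorem statement14 (m : ℕ) (hm : 2 ≤ m)
    (R : Fin m → Fin m → Fin m → Fin m → ℝ) (hR : IsACT R)
    (lam : Fin (m * (m - 1) / 2) → ℝ) (ω : Fin (m * (m - 1) / 2) → Fin m → Fin m → ℝ)
    (hspec : SpectralData R lam ω)
    (k : ℕ) (hk1 : 1 ≤ k) (hk2 : k ≤ m * (m - 1) / 2)
    (X Y : Fin k → Fin m → ℝ)
    (hind : ∀ i, LinearIndependent ℝ ![X i, Y i])
    (horth : ∀ i j, i ≠ j → inner2 (dform (X i) (Y i)) (dform (X j) (Y j)) = 0) :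
    (1 / 2) * partialAvg lam k ≤ (∑ i, sect R (X i) (Y i)) / (k : ℝ) := by
  classical
  obtain ⟨hanti, hortho, heig, hmono⟩ := hspec
  have hpos : ∀ i, 0 < inner2 (dform (X i) (Y i)) (dform (X i) (Y i)) :=
    fun i => dform_pos _ _ (hind i)
  have hexp : ∀ i : Fin k, ∃ g : Fin (m * (m - 1) / 2) → ℝ,
      ∀ a b, dform (X i) (Y i) a b = ∑ α, g α * ω α a b := fun i =>
    complete_expansion ω hanti hortho _ (fun a b => dform_antisym (X i) (Y i) a b)
  choose g hg using hexp
  set n : Fin k → ℝ :=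
    fun i => Real.sqrt (inner2 (dform (X i) (Y i)) (dform (X i) (Y i))) with hn
  have hnpos : ∀ i, 0 < n i := fun i => Real.sqrt_pos.2 (hpos i)
  have hnsq : ∀ i, n i * n i = inner2 (dform (X i) (Y i)) (dform (X i) (Y i)) :=
    fun i => Real.mul_self_sqrt (hpos i).le
  set c : Fin k → Fin (m * (m - 1) / 2) → ℝ := fun i α => g i α / n i with hcdef
  have hwfun : ∀ i : Fin k, dform (X i) (Y i) = fun a b => ∑ α, g i α * ω α a b :=
    fun i => funext fun a => funext fun b => hg i a b
  have hww : ∀ i j, inner2 (dform (X i) (Y i)) (dform (X j) (Y j))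
      = ∑ α, g i α * g j α := by
    intro i j
    rw [hwfun i, hwfun j]
    exact inner2_expand ω hortho _ _
  have hcrow : ∀ i j, ∑ α, c i α * c j α = if i = j then (1:ℝ) else 0 := by
    intro i j
    have e : ∑ α, c i α * c j α = (∑ α, g i α * g j α) / (n i * n j) := by
      rw [Finset.sum_div]
      refine Finset.sum_congr rfl fun α _ => ?_
      rw [hcdef]
      simp only
      rw [div_mul_div_comm]
    rw [e, ← hww]
    by_cases hij : i = j
    · subst hij
      rw [if_pos rfl, ← hnsq i]
      exact div_self (ne_of_gt (mul_pos (hnpos i) (hnpos i)))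
    · rw [horth i j hij, zero_div, if_neg hij]
  have hsect : ∀ i, sect R (X i) (Y i) = (1/2) * ∑ α, lam α * (c i α)^2 := by
    intro i
    have hnum : ∑ a, ∑ b, ∑ k', ∑ t, R a b k' t * X i a * Y i b * X i k' * Y i t
        = ∑ α, lam α * (g i α)^2 := by
      rw [sect_num R hR (X i) (Y i)]
      exact ray_expand R lam ω hortho heig (g i) _ (hg i)
    unfold sect
    rw [hnum]
    have hden : (∑ a, X i a * X i a) * (∑ a, Y i a * Y i a) - (∑ a, X i a * Y i a)^2
        = 2 * (n i * n i) := by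
      rw [hnsq i, lagrange]
      ring
    rw [hden]
    have hterm : ∑ α, lam α * (c i α)^2 = (∑ α, lam α * (g i α)^2) / (n i * n i) := by
      rw [Finset.sum_div]
      refine Finset.sum_congr rfl fun α _ => ?_
      rw [hcdef]
      simp only
      rw [div_pow]
      rw [sq (n i)]
      ring
    rw [hterm]
    have hne : n i * n i ≠ 0 := ne_of_gt (mul_pos (hnpos i) (hnpos i))
    field_simp
  have hsum : ∑ i, sect R (X i) (Y i) = (1/2) * ∑ i, ∑ α, lam α * (c i α)^2 := by
    rw [Finset.mul_sum]
    exact Finset.sum_congr rfl fun i _ => hsect i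
  have hkf := kyfan hk1 hk2 lam hmono c hcrow
  rw [hsum]
  unfold partialAvg
  have hkpos : (0:ℝ) < (k : ℝ) := by exact_mod_cast hk1
  rw [mul_div_assoc]
  refine mul_le_mul_of_nonneg_left ?_ (by norm_num)
  exact (div_le_div_iff_of_pos_right hkpos).2 hkf

end

end Paper
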